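/- Let n, q be natural numbers with 0 < q < n. Let S₁, …, Sₙ : ℝ → ℝ be differentiable functions; for z ∈ ℝⁿ write S(z) = (S₁(z₁), …, Sₙ(zₙ)) ∈ ℝⁿ and DS(z) for the n×n diagonal matrix with entries S₁′(z₁), …, Sₙ′(zₙ). Let C be an n×n diagonal matrix, A an n×n real matrix, p⋆, p ∈ ℝ, x⋆ ∈ ℝⁿ, and let V ∈ ℝ^{n×q} and W ∈ ℝ^{n×(n−q)} have orthonormal columns. Suppose (−C + p⋆ A DS(x⋆)) V = 0. Then for every y ∈ ℝⁿ, the spectral norm of the (n−q)×(q+1) matrix Wᵀ[(−C + pA·DS(y))V | A(S(y) − S(x⋆))] equals the spectral norm of the n×(q+1) matrix WWᵀA[(p·DS(y) − p⋆·DS(x⋆))V | S(y) − S(x⋆)]. -/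

import Mathlib

/-!
Subtracting the kernel relation `(−C + p⋆A·DS(x⋆))V = 0` turns the first block into
`A(p·DS(y) − p⋆·DS(x⋆))V`, so both matrices are `Wᵀ` resp. `W Wᵀ` applied to the same matrix
`A[(p·DS(y) − p⋆·DS(x⋆))V | S(y) − S(x⋆)]`; since `WᵀW = 1`, left multiplication by `W` is an
isometry and does not change the spectral norm.
-/

open Matrix

/-- Spectral norm of a real matrix: the operator norm induced by Euclidean vector norms. -/
noncomputable def specNorm {m n : Type*} [Fintype m] [Fintype n] [DecidableEq n]
    (M : Matrix m n ℝ) : ℝ :=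
  ‖LinearMap.toContinuousLinearMap (Matrix.toEuclideanLin M)‖

/-- The diagonal matrix `DS(z)` of derivatives `Sᵢ′(zᵢ)` of the activation functions. -/
noncomputable def DS {n : ℕ} (S : Fin n → ℝ → ℝ) (z : Fin n → ℝ) :
    Matrix (Fin n) (Fin n) ℝ :=
  Matrix.diagonal fun i => deriv (S i) (z i)

section Orthonormal

variable {m k l : Type*} [Fintype m] [Fintype k] [DecidableEq k] [Fintype l] [DecidableEq l]
  {W : Matrix m k ℝ}

theorem norm_toLp_mulVec_of_transpose_mul_self_eq_one (hW : Wᵀ * W = 1) (v : k → ℝ) :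
    ‖WithLp.toLp 2 (W *ᵥ v)‖ = ‖WithLp.toLp 2 v‖ := by
  have hinner : W *ᵥ v ⬝ᵥ W *ᵥ v = v ⬝ᵥ v :=
    calc W *ᵥ v ⬝ᵥ W *ᵥ v = v ⬝ᵥ Wᵀ *ᵥ (W *ᵥ v) := by rw [dotProduct_mulVec v Wᵀ, vecMul_transpose]
      _ = v ⬝ᵥ v := by rw [mulVec_mulVec, hW, one_mulVec]
  rw [EuclideanSpace.norm_eq, EuclideanSpace.norm_eq]
  simpa [dotProduct, Real.norm_eq_abs, sq_abs, pow_two] using congrArg Real.sqrt hinner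

theorem specNorm_mul_of_transpose_mul_self_eq_one (hW : Wᵀ * W = 1) (N : Matrix k l ℝ) :
    specNorm (W * N) = specNorm N :=
  ContinuousLinearMap.opNorm_ext _ _ fun v => by
    simpa [toLpLin_apply, mulVec_mulVec] using
      norm_toLp_mulVec_of_transpose_mul_self_eq_one hW (N *ᵥ WithLp.ofLp v)

end Orthonormal

theorem neg_add_smul_mul_mul_eq_of_mul_eq_zero {n q R : Type*} [Fintype n] [CommRing R]
    {C A D D₀ : Matrix n n R} {V : Matrix n q R} {p p₀ : R}
    (hker : (-C + p₀ • (A * D₀)) * V = 0) :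
    (-C + p • (A * D)) * V = A * ((p • D - p₀ • D₀) * V) := by
  calc (-C + p • (A * D)) * V = (-C + p₀ • (A * D₀)) * V + A * ((p • D - p₀ • D₀) * V) := by
        simp only [Matrix.add_mul, Matrix.mul_sub, Matrix.sub_mul,
          Matrix.mul_smul, Matrix.smul_mul, Matrix.mul_assoc]
        abel
    _ = A * ((p • D - p₀ • D₀) * V) := by rw [hker, zero_add]

theorem stmt_6_general (n q : ℕ)
    (S : Fin n → ℝ → ℝ)
    (C A : Matrix (Fin n) (Fin n) ℝ)
    (pstar p : ℝ) (xstar : Fin n → ℝ)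
    (V : Matrix (Fin n) (Fin q) ℝ) (W : Matrix (Fin n) (Fin (n - q)) ℝ)
    (hW : Wᵀ * W = 1)
    (hker : (-C + pstar • (A * DS S xstar)) * V = 0) :
    ∀ y : Fin n → ℝ,
      specNorm (Wᵀ * Matrix.fromCols
          ((-C + p • (A * DS S y)) * V)
          (Matrix.of fun i (_ : Fin 1) =>
            A.mulVec (fun j => S j (y j) - S j (xstar j)) i))
      = specNorm (W * Wᵀ * (A * Matrix.fromCols
          ((p • DS S y - pstar • DS S xstar) * V)
          (Matrix.of fun i (_ : Fin 1) => S i (y i) - S i (xstar i)))) := by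
  intro y
  have hcol : (Matrix.of fun i (_ : Fin 1) => A.mulVec (fun j => S j (y j) - S j (xstar j)) i)
      = A * Matrix.of fun i (_ : Fin 1) => S i (y i) - S i (xstar i) :=
    replicateCol_mulVec A _
  rw [neg_add_smul_mul_mul_eq_of_mul_eq_zero hker, hcol, ← mul_fromCols, Matrix.mul_assoc W,
    specNorm_mul_of_transpose_mul_self_eq_one hW]

/-- Hopfield model: the norm of `Wᵀ[D_xΦ(y,p)·V | A(S(y) − S(x⋆))]` equals the norm of
`WWᵀA[(p·DS(y) − p⋆·DS(x⋆))V | S(y) − S(x⋆)]`, given `(−C + p⋆A·DS(x⋆))V = 0`. -/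
theorem stmt_6 (n q : ℕ) (hq : 0 < q) (hqn : q < n)
    (S : Fin n → ℝ → ℝ) (hS : ∀ i, Differentiable ℝ (S i))
    (C A : Matrix (Fin n) (Fin n) ℝ) (hC : C.IsDiag)
    (pstar p : ℝ) (xstar : Fin n → ℝ)
    (V : Matrix (Fin n) (Fin q) ℝ) (W : Matrix (Fin n) (Fin (n - q)) ℝ)
    (hV : Vᵀ * V = 1) (hW : Wᵀ * W = 1)
    (hker : (-C + pstar • (A * DS S xstar)) * V = 0) :
    ∀ y : Fin n → ℝ,
      specNorm (Wᵀ * Matrix.fromCols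
          ((-C + p • (A * DS S y)) * V)
          (Matrix.of fun i (_ : Fin 1) =>
            A.mulVec (fun j => S j (y j) - S j (xstar j)) i))
      = specNorm (W * Wᵀ * (A * Matrix.fromCols
          ((p • DS S y - pstar • DS S xstar) * V)
          (Matrix.of fun i (_ : Fin 1) => S i (y i) - S i (xstar i)))) :=
  stmt_6_general n q S C A pstar p xstar V W hW hker
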